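/- Let $\theta(\alpha,\beta)$ be the standard spherical parameterization of $S^2$ with $\cos\beta\neq 0$, $\sigma,\sigma'\neq 0$, and $x,x'\in\mathbb{R}^3$ neither parallel to $\theta$, with $x\cdot\theta\neq 0$. If $|x|^2-(x\cdot\theta)^2=|x'|^2-(x'\cdot\theta)^2$, $\sigma=\sigma'$, $\sigma(x\cdot\theta_\alpha)(x\cdot\theta)=\sigma'(x'\cdot\theta_\alpha)(x'\cdot\theta)$, and $\sigma(x\cdot\theta_\beta)(x\cdot\theta)=\sigma'(x'\cdot\theta_\beta)(x'\cdot\theta)$, then $x=x'$ or $x=-x'$. -/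
import Mathlib


open Matrix Real

/-- Reconstruction of a vector's coordinates from its dot products with the
orthogonal frame `θ, θα, θβ`, plus the norm identity. -/
lemma recon_aux (cA sA cB sB p q r a b c : ℝ)
    (hA : sA ^ 2 + cA ^ 2 = 1) (hB : sB ^ 2 + cB ^ 2 = 1)
    (ha : a = p * (cA * cB) + q * (sA * cB) + r * sB)
    (hb : b = p * (-sA * cB) + q * (cA * cB))
    (hc : c = p * (-cA * sB) + q * (-sA * sB) + r * cB) :
    p * cB = a * cA * cB ^ 2 - b * sA - c * cA * sB * cB ∧
    q * cB = a * sA * cB ^ 2 + b * cA - c * sA * sB * cB ∧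
    r = a * sB + c * cB ∧
    (p ^ 2 + q ^ 2 + r ^ 2) * cB ^ 2 = a ^ 2 * cB ^ 2 + b ^ 2 + c ^ 2 * cB ^ 2 := by
  subst ha hb hc
  refine ⟨?_, ?_, ?_, ?_⟩
  · linear_combination (-(p * cA ^ 2 * cB) - q * sA * cA * cB) * hB + (-(p * cB)) * hA
  · linear_combination (-(p * sA * cA * cB) - q * sA ^ 2 * cB) * hB + (-(q * cB)) * hA
  · linear_combination (-r) * hB
  · linear_combination
      (-(cB ^ 2) * ((p * cA + q * sA) ^ 2 + r ^ 2)) * hB +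
      (-(cB ^ 2) * (p ^ 2 + q ^ 2)) * hA

/-- The left projection of the canonical relation of the cylinder transform is two-to-one
away from `{x·θ = 0}`: if `x, x'` (neither parallel to `θ`, with `x·θ ≠ 0`) give the same
image point, then `x = x'` or `x = -x'`. -/
theorem left_projection_two_to_one
    (α β σ σ' : ℝ) (hβ : cos β ≠ 0) (hσ : σ ≠ 0) (hσ' : σ' ≠ 0)
    (θ θα θβ x x' : Fin 3 → ℝ)
    (hθ : θ = ![cos α * cos β, sin α * cos β, sin β])
    (hθα : θα = ![-sin α * cos β, cos α * cos β, 0])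
    (hθβ : θβ = ![-cos α * sin β, -sin α * sin β, cos β])
    (hxnp : ¬ ∃ c : ℝ, x = c • θ) (hx'np : ¬ ∃ c : ℝ, x' = c • θ)
    (hxθ : x ⬝ᵥ θ ≠ 0)
    (h1 : x ⬝ᵥ x - (x ⬝ᵥ θ) ^ 2 = x' ⬝ᵥ x' - (x' ⬝ᵥ θ) ^ 2)
    (h2 : σ = σ')
    (h3 : σ * (x ⬝ᵥ θα) * (x ⬝ᵥ θ) = σ' * (x' ⬝ᵥ θα) * (x' ⬝ᵥ θ))
    (h4 : σ * (x ⬝ᵥ θβ) * (x ⬝ᵥ θ) = σ' * (x' ⬝ᵥ θβ) * (x' ⬝ᵥ θ)) :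
    x = x' ∨ x = -x' := by
  subst h2
  have hA : sin α ^ 2 + cos α ^ 2 = 1 := sin_sq_add_cos_sq α
  have hB : sin β ^ 2 + cos β ^ 2 = 1 := sin_sq_add_cos_sq β
  set a := x ⬝ᵥ θ with hsa
  set b := x ⬝ᵥ θα with hsb
  set c := x ⬝ᵥ θβ with hsc
  set a' := x' ⬝ᵥ θ with hsa'
  set b' := x' ⬝ᵥ θα with hsb'
  set c' := x' ⬝ᵥ θβ with hsc'
  have ea : a = x 0 * (cos α * cos β) + x 1 * (sin α * cos β) + x 2 * sin β := by
    rw [hsa, hθ]; simp [dotProduct, Fin.sum_univ_three]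
  have eb : b = x 0 * (-sin α * cos β) + x 1 * (cos α * cos β) := by
    rw [hsb, hθα]; simp [dotProduct, Fin.sum_univ_three]
  have ec : c = x 0 * (-cos α * sin β) + x 1 * (-sin α * sin β) + x 2 * cos β := by
    rw [hsc, hθβ]; simp [dotProduct, Fin.sum_univ_three]
  have ea' : a' = x' 0 * (cos α * cos β) + x' 1 * (sin α * cos β) + x' 2 * sin β := by
    rw [hsa', hθ]; simp [dotProduct, Fin.sum_univ_three]
  have eb' : b' = x' 0 * (-sin α * cos β) + x' 1 * (cos α * cos β) := by
    rw [hsb', hθα]; simp [dotProduct, Fin.sum_univ_three]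
  have ec' : c' = x' 0 * (-cos α * sin β) + x' 1 * (-sin α * sin β) + x' 2 * cos β := by
    rw [hsc', hθβ]; simp [dotProduct, Fin.sum_univ_three]
  have exx : x ⬝ᵥ x = x 0 ^ 2 + x 1 ^ 2 + x 2 ^ 2 := by
    simp [dotProduct, Fin.sum_univ_three]; ring
  have exx' : x' ⬝ᵥ x' = x' 0 ^ 2 + x' 1 ^ 2 + x' 2 ^ 2 := by
    simp [dotProduct, Fin.sum_univ_three]; ring
  obtain ⟨hp, hq, hr, hn⟩ :=
    recon_aux (cos α) (sin α) (cos β) (sin β) (x 0) (x 1) (x 2) a b c hA hB ea eb ec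
  obtain ⟨hp', hq', hr', hn'⟩ :=
    recon_aux (cos α) (sin α) (cos β) (sin β) (x' 0) (x' 1) (x' 2) a' b' c' hA hB ea' eb' ec'
  -- cancel σ
  have h3' : b * a = b' * a' := by
    apply mul_left_cancel₀ hσ; linear_combination h3
  have h4' : c * a = c' * a' := by
    apply mul_left_cancel₀ hσ; linear_combination h4
  -- norm equation in scalars
  have hnorm : b ^ 2 + c ^ 2 * cos β ^ 2 = b' ^ 2 + c' ^ 2 * cos β ^ 2 := by
    have h1' : (x ⬝ᵥ x - a ^ 2) * cos β ^ 2 = (x' ⬝ᵥ x' - a' ^ 2) * cos β ^ 2 := by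
      rw [h1]
    rw [exx, exx'] at h1'
    linear_combination h1' - hn + hn'
  -- a' ≠ 0
  have ha' : a' ≠ 0 := by
    intro h0
    rw [h0, mul_zero] at h3' h4'
    have hbz : b = 0 := by
      rcases mul_eq_zero.mp h3' with h | h
      · exact h
      · exact absurd h hxθ
    have hcz : c = 0 := by
      rcases mul_eq_zero.mp h4' with h | h
      · exact h
      · exact absurd h hxθ
    rw [hbz, hcz] at hp hq
    rw [hcz] at hr
    apply hxnp
    refine ⟨a, funext fun i => ?_⟩
    fin_cases i <;> simp [hθ, Pi.smul_apply, smul_eq_mul]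
    · apply mul_right_cancel₀ hβ; linear_combination hp
    · apply mul_right_cancel₀ hβ; linear_combination hq
    · linear_combination hr
  -- b', c' not both zero
  have hbc' : ¬ (b' = 0 ∧ c' = 0) := by
    rintro ⟨hbz, hcz⟩
    rw [hbz, hcz] at hp' hq'
    rw [hcz] at hr'
    apply hx'np
    refine ⟨a', funext fun i => ?_⟩
    fin_cases i <;> simp [hθ, Pi.smul_apply, smul_eq_mul]
    · apply mul_right_cancel₀ hβ; linear_combination hp'
    · apply mul_right_cancel₀ hβ; linear_combination hq'
    · linear_combination hr'
  have hpos : b' ^ 2 + c' ^ 2 * cos β ^ 2 ≠ 0 := by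
    rcases not_and_or.mp hbc' with h | h <;> push_neg at h
    · have h1 : 0 < b' ^ 2 := lt_of_le_of_ne (sq_nonneg b') (Ne.symm (pow_ne_zero 2 h))
      have h2 : 0 ≤ c' ^ 2 * cos β ^ 2 :=
        mul_nonneg (sq_nonneg c') (sq_nonneg (cos β))
      positivity
    · have h1 : 0 < c' ^ 2 * cos β ^ 2 :=
        mul_pos (lt_of_le_of_ne (sq_nonneg c') (Ne.symm (pow_ne_zero 2 h)))
          (lt_of_le_of_ne (sq_nonneg (cos β)) (Ne.symm (pow_ne_zero 2 hβ)))
      have h2 : 0 ≤ b' ^ 2 := sq_nonneg b'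
      positivity
  -- a² = a'²
  have key : (b' ^ 2 + c' ^ 2 * cos β ^ 2) * ((a - a') * (a + a')) = 0 := by
    linear_combination (-(a ^ 2)) * hnorm + (b * a + b' * a') * h3' +
      (cos β ^ 2 * (c * a + c' * a')) * h4'
  rcases mul_eq_zero.mp key with h | h
  · exact absurd h hpos
  rcases mul_eq_zero.mp h with h | h
  · -- a = a'
    have haa : a = a' := by linarith
    have hbb : b = b' := by
      apply mul_right_cancel₀ hxθ; rw [h3', haa]
    have hcc : c = c' := by
      apply mul_right_cancel₀ hxθ; rw [h4', haa]
    left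
    funext i
    fin_cases i
    · show x 0 = x' 0
      apply mul_right_cancel₀ hβ
      rw [hp, hp', haa, hbb, hcc]
    · show x 1 = x' 1
      apply mul_right_cancel₀ hβ
      rw [hq, hq', haa, hbb, hcc]
    · show x 2 = x' 2
      rw [hr, hr', haa, hcc]
  · -- a = -a'
    have haa : a = -a' := by linarith
    have hbb : b = -b' := by
      apply mul_right_cancel₀ hxθ
      rw [h3', haa]; ring
    have hcc : c = -c' := by
      apply mul_right_cancel₀ hxθ
      rw [h4', haa]; ring
    right
    funext i
    fin_cases i
    · show x 0 = -(x' 0)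
      apply mul_right_cancel₀ hβ
      rw [hp, haa, hbb, hcc]
      linear_combination hp'
    · show x 1 = -(x' 1)
      apply mul_right_cancel₀ hβ
      rw [hq, haa, hbb, hcc]
      linear_combination hq'
    · show x 2 = -(x' 2)
      rw [hr, haa, hcc]
      linear_combination hr'
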